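/- Let r_1, ..., r_k be nonnegative reals with ∑_{i=1}^k r_i^3 = 1 and r_i ≤ 2^(-1/3) for i ≥ 2. Then ∑_{i=1}^k 4π r_i^2 ≥ 4π + ∑_{i=2}^k 4π r_i^2 (1 - r_i) ≥ 4π + 4π(1 - 2^(-1/3)) ∑_{i=2}^k r_i^2. -/
import Mathlib


open Real Finset

/-- Let `r 0, …, r (k-1)` be nonnegative reals with `∑ r i ^ 3 = 1` and
`r i ≤ 2^(-1/3)` for all `i ≠ 0`.  Then
`∑ 4π r i ^ 2 ≥ 4π + ∑_{i ≠ 0} 4π r i ^ 2 (1 - r i)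
             ≥ 4π + 4π (1 - 2^(-1/3)) ∑_{i ≠ 0} r i ^ 2`. -/
theorem perimeter_excess_of_components (k : ℕ) (hk : 0 < k) (r : Fin k → ℝ)
    (hnonneg : ∀ i, 0 ≤ r i)
    (hsum : ∑ i, r i ^ 3 = 1)
    (hle : ∀ i : Fin k, i ≠ ⟨0, hk⟩ → r i ≤ (2 : ℝ) ^ (-(1 : ℝ) / 3)) :
    (∑ i, 4 * π * r i ^ 2 ≥
      4 * π + ∑ i ∈ Finset.univ.erase ⟨0, hk⟩, 4 * π * r i ^ 2 * (1 - r i)) ∧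
    (4 * π + ∑ i ∈ Finset.univ.erase ⟨0, hk⟩, 4 * π * r i ^ 2 * (1 - r i) ≥
      4 * π + 4 * π * (1 - (2 : ℝ) ^ (-(1 : ℝ) / 3)) *
        ∑ i ∈ Finset.univ.erase ⟨0, hk⟩, r i ^ 2) := by
  have hπ : (0:ℝ) < π := Real.pi_pos
  set i0 : Fin k := ⟨0, hk⟩ with hi0
  set S := Finset.univ.erase i0 with hS
  have hsplit2 : ∑ i, r i ^ 2 = r i0 ^ 2 + ∑ i ∈ S, r i ^ 2 :=
    (Finset.add_sum_erase _ _ (Finset.mem_univ i0)).symm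
  have hsplit3 : r i0 ^ 3 + ∑ i ∈ S, r i ^ 3 = 1 := by
    have := (Finset.add_sum_erase _ (fun i => r i ^ 3) (Finset.mem_univ i0))
    rw [this]; exact hsum
  have hBnn : 0 ≤ ∑ i ∈ S, r i ^ 3 :=
    Finset.sum_nonneg fun i _ => pow_nonneg (hnonneg i) 3
  have hr0 : 0 ≤ r i0 := hnonneg i0
  have hr0le1 : r i0 ≤ 1 := by nlinarith [sq_nonneg (r i0), sq_nonneg (r i0 + 1)]
  have hkey : r i0 ^ 3 ≤ r i0 ^ 2 := by nlinarith [sq_nonneg (r i0)]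
  have hrw : ∑ i ∈ S, 4 * π * r i ^ 2 * (1 - r i)
      = 4 * π * (∑ i ∈ S, r i ^ 2) - 4 * π * (∑ i ∈ S, r i ^ 3) := by
    rw [Finset.mul_sum, Finset.mul_sum, ← Finset.sum_sub_distrib]
    exact Finset.sum_congr rfl fun i _ => by ring
  constructor
  · have : ∑ i, 4 * π * r i ^ 2 = 4 * π * ∑ i, r i ^ 2 := by
      rw [Finset.mul_sum]
    rw [this, hsplit2, hrw]
    nlinarith [hπ]
  · have hc : (2:ℝ) ^ (-(1:ℝ)/3) ≤ 1 := by
      apply Real.rpow_le_one_of_one_le_of_nonpos (by norm_num) (by norm_num)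
    have hterm : ∀ i ∈ S, 4 * π * (1 - (2:ℝ) ^ (-(1:ℝ)/3)) * r i ^ 2
        ≤ 4 * π * r i ^ 2 * (1 - r i) := by
      intro i hi
      have hi' : i ≠ i0 := (Finset.mem_erase.mp hi).1
      have := hle i hi'
      nlinarith [mul_nonneg (sq_nonneg (r i)) (sub_nonneg.2 this), hπ.le, sq_nonneg (r i)]
    have := Finset.sum_le_sum hterm
    rw [← Finset.mul_sum] at this
    linarith
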